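/- Let B be an invertible real 2×2 matrix, a ∈ ℝ², F(x̂) = B x̂ + a, and J := det B. Let Û ⊆ ℝ² be open. Let Ξ̂ : Û → ℝ^{2×2} and τ̂ : Û → ℝ² be continuously differentiable and û : Û → ℝ twice continuously differentiable, with transforms Ξ (Piola–Kirchhoff: Ξ(F(x̂)) := |J|⁻¹ B Ξ̂(x̂) Bᵀ), τ (Piola: τ(F(x̂)) := |J|⁻¹ B τ̂(x̂)), and u := û ∘ F⁻¹ on F(Û). Let T̂ ⊆ Û be a compact measurable set and T := F(T̂). Then ∫_T [ u·(div τ) + ∇u · (τ − Div Ξ) − ∇∇u : Ξ ] dx = ∫_{T̂} [ û·(div τ̂) + ∇û · (τ̂ − Div Ξ̂) − ∇∇û : Ξ̂ ] dx̂, where the integrals are with respect to two-dimensional Lebesgue measure. -/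

import Mathlib

open MeasureTheory Matrix

/-- The `i`-th partial derivative of a scalar field on `ℝ²`. -/
noncomputable def pd (i : Fin 2) (f : (Fin 2 → ℝ) → ℝ) (x : Fin 2 → ℝ) : ℝ :=
  fderiv ℝ f x (Pi.single i 1)

/-- The gradient `∇f = (∂₁f, ∂₂f)` of a scalar field on `ℝ²`. -/
noncomputable def gradF (f : (Fin 2 → ℝ) → ℝ) (x : Fin 2 → ℝ) : Fin 2 → ℝ :=
  fun i => pd i f x

/-- The divergence `div τ = ∂₁τ₁ + ∂₂τ₂` of a vector field on `ℝ²`. -/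
noncomputable def divVec (τ : (Fin 2 → ℝ) → (Fin 2 → ℝ)) (x : Fin 2 → ℝ) : ℝ :=
  ∑ i : Fin 2, pd i (fun y => τ y i) x

/-- The row-wise divergence `(Div N)_i = Σ_j ∂_j N_{ij}` of a matrix field. -/
noncomputable def DivMat (N : (Fin 2 → ℝ) → Matrix (Fin 2) (Fin 2) ℝ)
    (x : Fin 2 → ℝ) : Fin 2 → ℝ :=
  fun i => ∑ j : Fin 2, pd j (fun y => N y i j) x

/-- The Hessian `∇∇u = (∂_i ∂_j u)_{ij}` of a scalar field. -/
noncomputable def hessian (f : (Fin 2 → ℝ) → ℝ) (x : Fin 2 → ℝ) :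
    Matrix (Fin 2) (Fin 2) ℝ :=
  Matrix.of fun i j => pd i (pd j f) x

/-- Frobenius inner product `A : C = Σ_{i,j} A_{ij} C_{ij}` of 2×2 matrices. -/
def frob (A C : Matrix (Fin 2) (Fin 2) ℝ) : ℝ :=
  ∑ i : Fin 2, ∑ j : Fin 2, A i j * C i j

/-!
Everything happens pointwise. Along the affine map `F y = B y + a` the chain rule gives
`∇u ∘ F = B⁻ᵀ ∇û`, `∇∇u ∘ F = B⁻ᵀ (∇∇û) B⁻¹`, `div τ ∘ F = |J|⁻¹ div τ̂` (the trace of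
`B (Dτ̂) B⁻¹`) and `Div Ξ ∘ F = |J|⁻¹ B Div Ξ̂`. In each pairing of the integrand the factors
`B` and `B⁻¹` cancel, so the integrand at `F x̂` is `|J|⁻¹` times the one at `x̂`, and this is
exactly compensated by the Jacobian `|J|` of the change of variables.
-/

open Filter Topology

local notation "ℝ²" => Fin 2 → ℝ

variable {B : Matrix (Fin 2) (Fin 2) ℝ} {x : ℝ²}

lemma fderiv_apply_eq_gradF_dotProduct (f : ℝ² → ℝ) (v : ℝ²) :
    fderiv ℝ f x v = gradF f x ⬝ᵥ v := by
  conv_lhs => rw [pi_eq_sum_univ' v]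
  simp only [map_sum, map_smul, smul_eq_mul, dotProduct, gradF, pd, mul_comm]

lemma pd_sum_mul {ι : Type*} [Fintype ι] (c : ι → ℝ) {g : ι → ℝ² → ℝ}
    (hg : ∀ l, DifferentiableAt ℝ (g l) x) (k : Fin 2) :
    pd k (fun y => ∑ l, c l * g l y) x = ∑ l, c l * pd k (g l) x := by
  simp [pd, fderiv_fun_sum fun l _ => (hg l).const_mul (c l), fderiv_const_mul (hg _)]

lemma gradF_comp_affine (hB : IsUnit B.det) (a : ℝ²) {f g : ℝ² → ℝ}
    (hg : DifferentiableAt ℝ g x) (hfg : (fun y => f (B *ᵥ y + a)) =ᶠ[𝓝 x] g) :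
    gradF f (B *ᵥ x + a) = gradF g x ᵥ* B⁻¹ := by
  set G : ℝ² → ℝ² := fun z => B⁻¹ *ᵥ (z - a)
  have hGF : G (B *ᵥ x + a) = x := by
    simp only [G, add_sub_cancel_right, mulVec_mulVec, nonsing_inv_mul B hB, one_mulVec]
  have hG : HasFDerivAt G (mulVecLin B⁻¹).toContinuousLinearMap (B *ᵥ x + a) :=
    (mulVecLin B⁻¹).toContinuousLinearMap.hasFDerivAt.comp _ ((hasFDerivAt_id _).sub_const a)
  have hfG : f =ᶠ[𝓝 (B *ᵥ x + a)] g ∘ G := by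
    have hGx := hG.continuousAt.tendsto
    rw [hGF] at hGx
    filter_upwards [hGx.eventually hfg] with z hz
    simpa only [G, Function.comp_apply, mulVec_mulVec, mul_nonsing_inv B hB, one_mulVec,
      sub_add_cancel] using hz
  have hg' : HasFDerivAt g (fderiv ℝ g x) (G (B *ᵥ x + a)) := by
    rw [hGF]; exact hg.hasFDerivAt
  have hf := (hg'.comp _ hG).congr_of_eventuallyEq hfG
  ext k
  rw [gradF, pd, hf.fderiv, ContinuousLinearMap.comp_apply, fderiv_apply_eq_gradF_dotProduct,
    LinearMap.coe_toContinuousLinearMap', mulVecLin_apply, dotProduct_mulVec, dotProduct_single,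
    mul_one]

noncomputable def jac (σ : ℝ² → ℝ²) (x : ℝ²) : Matrix (Fin 2) (Fin 2) ℝ :=
  Matrix.of fun i => gradF (fun y => σ y i) x

lemma divVec_eq_trace_jac (σ : ℝ² → ℝ²) : divVec σ x = (jac σ x).trace := rfl

lemma hessian_eq_transpose_jac_gradF (f : ℝ² → ℝ) : hessian f x = (jac (gradF f) x)ᵀ := rfl

lemma jac_mulVec (M : Matrix (Fin 2) (Fin 2) ℝ) {σ : ℝ² → ℝ²}
    (hσ : ∀ i, DifferentiableAt ℝ (fun y => σ y i) x) :
    jac (fun y => M *ᵥ σ y) x = M * jac σ x := by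
  ext i k
  exact pd_sum_mul (M i) hσ k

lemma jac_comp_affine (hB : IsUnit B.det) (a : ℝ²) {σ σ' : ℝ² → ℝ²}
    (hσ' : ∀ i, DifferentiableAt ℝ (fun y => σ' y i) x)
    (hσ : (fun y => σ (B *ᵥ y + a)) =ᶠ[𝓝 x] σ') :
    jac σ (B *ᵥ x + a) = jac σ' x * B⁻¹ := by
  ext i k
  rw [jac, of_apply, gradF_comp_affine hB a (hσ' i) (hσ.mono fun y hy => congrFun hy i)]
  rfl

lemma jac_comp_affine_of_mulVec (hB : IsUnit B.det) (a : ℝ²) (M : Matrix (Fin 2) (Fin 2) ℝ)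
    {σ σ' : ℝ² → ℝ²} (hσ' : ∀ i, DifferentiableAt ℝ (fun y => σ' y i) x)
    (hσ : ∀ᶠ y in 𝓝 x, σ (B *ᵥ y + a) = M *ᵥ σ' y) :
    jac σ (B *ᵥ x + a) = M * jac σ' x * B⁻¹ := by
  have hMσ' (i : Fin 2) : DifferentiableAt ℝ (fun y => ∑ j, M i j * σ' y j) x :=
    DifferentiableAt.fun_sum fun j _ => (hσ' j).const_mul (M i j)
  rw [jac_comp_affine hB a (σ' := fun y => M *ᵥ σ' y) hMσ' hσ, jac_mulVec M hσ']

lemma divVec_comp_affine (hB : IsUnit B.det) (a : ℝ²) (c : ℝ) {σ σ' : ℝ² → ℝ²}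
    (hσ' : ∀ i, DifferentiableAt ℝ (fun y => σ' y i) x)
    (hσ : ∀ᶠ y in 𝓝 x, σ (B *ᵥ y + a) = c • (B *ᵥ σ' y)) :
    divVec σ (B *ᵥ x + a) = c * divVec σ' x := by
  have hσc : ∀ᶠ y in 𝓝 x, σ (B *ᵥ y + a) = (c • B) *ᵥ σ' y := by
    simpa only [smul_mulVec] using hσ
  rw [divVec_eq_trace_jac, jac_comp_affine_of_mulVec hB a _ hσ' hσc, trace_mul_comm,
    ← mul_assoc, mul_smul_comm, nonsing_inv_mul B hB, smul_mul_assoc, one_mul, trace_smul,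
    smul_eq_mul, divVec_eq_trace_jac]

lemma DivMat_mul_left (M : Matrix (Fin 2) (Fin 2) ℝ) {N : ℝ² → Matrix (Fin 2) (Fin 2) ℝ}
    (hN : ∀ i j, DifferentiableAt ℝ (fun y => N y i j) x) :
    DivMat (fun y => M * N y) x = M *ᵥ DivMat N x := by
  ext i
  simp only [DivMat, mul_apply, mulVec, dotProduct, Finset.mul_sum]
  rw [Finset.sum_comm]
  exact Finset.sum_congr rfl fun j _ => pd_sum_mul (M i) (fun l => hN l j) j

lemma DivMat_comp_affine (hB : IsUnit B.det) (a : ℝ²) (c : ℝ)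
    {N N' : ℝ² → Matrix (Fin 2) (Fin 2) ℝ} (hN' : ∀ i j, DifferentiableAt ℝ (fun y => N' y i j) x)
    (hN : ∀ᶠ y in 𝓝 x, N (B *ᵥ y + a) = c • (B * N' y * Bᵀ)) :
    DivMat N (B *ᵥ x + a) = c • (B *ᵥ DivMat N' x) := by
  ext i
  have hrow : ∀ᶠ y in 𝓝 x, N (B *ᵥ y + a) i = c • (B *ᵥ (B * N' y) i) := by
    filter_upwards [hN] with y hy
    rw [hy, ← vecMul_transpose]
    rfl
  have hBN' (j : Fin 2) : DifferentiableAt ℝ (fun y => ∑ l, B i l * N' y l j) x :=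
    DifferentiableAt.fun_sum fun l _ => (hN' l j).const_mul (B i l)
  calc DivMat N (B *ᵥ x + a) i = c * DivMat (fun y => B * N' y) x i :=
        divVec_comp_affine hB a c (σ := fun z => N z i) (σ' := fun y => (B * N' y) i) hBN' hrow
    _ = (c • (B *ᵥ DivMat N' x)) i := by rw [DivMat_mul_left B hN']; rfl

lemma hessian_comp_affine (hB : IsUnit B.det) (a : ℝ²) {u u' : ℝ² → ℝ}
    (hu' : ContDiffAt ℝ 2 u' x) (hu : (fun y => u (B *ᵥ y + a)) =ᶠ[𝓝 x] u') :
    hessian u (B *ᵥ x + a) = B⁻¹ᵀ * hessian u' x * B⁻¹ := by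
  have hgrad : ∀ᶠ y in 𝓝 x, gradF u (B *ᵥ y + a) = B⁻¹ᵀ *ᵥ gradF u' y := by
    filter_upwards [hu.eventually_nhds, hu'.eventually (by simp)] with y huy hu'y
    rw [mulVec_transpose]
    exact gradF_comp_affine hB a (hu'y.differentiableAt (by simp)) huy
  have hpd (m : Fin 2) : DifferentiableAt ℝ (fun y => gradF u' y m) x :=
    ((hu'.fderiv_right (m := 1) (by norm_num)).clm_apply contDiffAt_const).differentiableAt
      (by simp)
  rw [hessian_eq_transpose_jac_gradF, hessian_eq_transpose_jac_gradF,
    jac_comp_affine_of_mulVec hB a _ hpd hgrad, transpose_mul, transpose_mul,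
    transpose_transpose, mul_assoc]

lemma frob_eq_trace_mul_transpose (A C : Matrix (Fin 2) (Fin 2) ℝ) :
    frob A C = (A * Cᵀ).trace := by
  simp [frob, trace, mul_apply]

lemma frob_congr_piolaKirchhoff (hB : IsUnit B.det) (c : ℝ) (H X : Matrix (Fin 2) (Fin 2) ℝ) :
    frob (B⁻¹ᵀ * H * B⁻¹) (c • (B * X * Bᵀ)) = c * frob H X := by
  have hBB : Bᵀ * B⁻¹ᵀ = 1 := by rw [← transpose_mul, nonsing_inv_mul B hB, transpose_one]
  rw [frob_eq_trace_mul_transpose, frob_eq_trace_mul_transpose, transpose_smul, mul_smul_comm,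
    trace_smul, smul_eq_mul, transpose_mul, transpose_mul, transpose_transpose,
    show B⁻¹ᵀ * H * B⁻¹ * (B * (Xᵀ * Bᵀ)) = B⁻¹ᵀ * (H * Xᵀ * Bᵀ) by
      simp only [Matrix.mul_assoc, ← Matrix.mul_assoc B⁻¹ B, nonsing_inv_mul B hB,
        Matrix.one_mul],
    trace_mul_comm, Matrix.mul_assoc, Matrix.mul_assoc, hBB, Matrix.mul_one]

lemma vecMul_inv_dotProduct_mulVec (hB : IsUnit B.det) (v w : ℝ²) :
    (v ᵥ* B⁻¹) ⬝ᵥ (B *ᵥ w) = v ⬝ᵥ w := by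
  rw [dotProduct_mulVec, vecMul_vecMul, nonsing_inv_mul B hB, vecMul_one]

lemma abs_det_mul_transformed_integrand (hB : IsUnit B.det) (v d : ℝ) (g t D : ℝ²)
    (H X : Matrix (Fin 2) (Fin 2) ℝ) :
    |B.det| * (v * (|B.det|⁻¹ * d)
        + (g ᵥ* B⁻¹) ⬝ᵥ (|B.det|⁻¹ • (B *ᵥ t) - |B.det|⁻¹ • (B *ᵥ D))
        - frob (B⁻¹ᵀ * H * B⁻¹) (|B.det|⁻¹ • (B * X * Bᵀ)))
      = v * d + g ⬝ᵥ (t - D) - frob H X := by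
  have hJ : |B.det| ≠ 0 := abs_ne_zero.mpr hB.ne_zero
  rw [← smul_sub, ← mulVec_sub, dotProduct_smul, vecMul_inv_dotProduct_mulVec hB,
    frob_congr_piolaKirchhoff hB, smul_eq_mul]
  field_simp

lemma setIntegral_image_affine (hB : IsUnit B.det) (a : ℝ²) {S : Set ℝ²} (hS : MeasurableSet S)
    (f : ℝ² → ℝ) :
    ∫ x in (fun y => B *ᵥ y + a) '' S, f x = ∫ y in S, |B.det| * f (B *ᵥ y + a) := by
  have hF (y : ℝ²) : HasFDerivAt (fun y => B *ᵥ y + a) (mulVecLin B).toContinuousLinearMap y :=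
    ((mulVecLin B).toContinuousLinearMap.hasFDerivAt).add_const a
  have hinj : Function.Injective fun y : ℝ² => B *ᵥ y + a :=
    (add_left_injective a).comp (mulVec_injective_of_isUnit ((isUnit_iff_isUnit_det B).mpr hB))
  have hdet : (mulVecLin B).toContinuousLinearMap.det = B.det := by
    rw [ContinuousLinearMap.det, LinearMap.coe_toContinuousLinearMap, ← toLin'_apply',
      LinearMap.det_toLin']
  rw [integral_image_eq_integral_abs_det_fderiv_smul volume hS
    (fun y _ => (hF y).hasFDerivWithinAt) hinj.injOn]
  simp only [hdet, smul_eq_mul]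

theorem stmt11_general
    (B : Matrix (Fin 2) (Fin 2) ℝ) (hB : IsUnit B.det) (a : Fin 2 → ℝ)
    (F : (Fin 2 → ℝ) → (Fin 2 → ℝ)) (hF : ∀ xhat, F xhat = B.mulVec xhat + a)
    (Uhat : Set (Fin 2 → ℝ)) (hUhat : IsOpen Uhat)
    (Xihat Ξ : (Fin 2 → ℝ) → Matrix (Fin 2) (Fin 2) ℝ)
    (hXismooth : ∀ i j : Fin 2, ContDiffOn ℝ 1 (fun x => Xihat x i j) Uhat)
    (hXi : ∀ xhat ∈ Uhat, Ξ (F xhat) = |B.det|⁻¹ • (B * Xihat xhat * B.transpose))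
    (tauhat τ : (Fin 2 → ℝ) → (Fin 2 → ℝ))
    (htausmooth : ∀ i : Fin 2, ContDiffOn ℝ 1 (fun x => tauhat x i) Uhat)
    (htau : ∀ xhat ∈ Uhat, τ (F xhat) = |B.det|⁻¹ • B.mulVec (tauhat xhat))
    (uhat u : (Fin 2 → ℝ) → ℝ)
    (huhatsmooth : ContDiffOn ℝ 2 uhat Uhat)
    (hu : ∀ xhat ∈ Uhat, u (F xhat) = uhat xhat)
    (That : Set (Fin 2 → ℝ))
    (hThatmeas : MeasurableSet That) (hThatsub : That ⊆ Uhat)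
    (T : Set (Fin 2 → ℝ)) (hT : T = F '' That) :
    ∫ x in T, (u x * divVec τ x + gradF u x ⬝ᵥ (τ x - DivMat Ξ x)
        - frob (hessian u x) (Ξ x))
      = ∫ xhat in That, (uhat xhat * divVec tauhat xhat
          + gradF uhat xhat ⬝ᵥ (tauhat xhat - DivMat Xihat xhat)
          - frob (hessian uhat xhat) (Xihat xhat)) := by
  simp only [hF] at hT hu htau hXi
  subst hT
  rw [setIntegral_image_affine hB a hThatmeas]
  refine setIntegral_congr_fun hThatmeas fun x hx => ?_
  have hxU : Uhat ∈ 𝓝 x := hUhat.mem_nhds (hThatsub hx)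
  have hdiff {g : ℝ² → ℝ} (hg : ContDiffOn ℝ 1 g Uhat) : DifferentiableAt ℝ g x :=
    (hg.contDiffAt hxU).differentiableAt one_ne_zero
  rw [hu x (hThatsub hx), htau x (hThatsub hx), hXi x (hThatsub hx),
    gradF_comp_affine hB a ((huhatsmooth.contDiffAt hxU).differentiableAt two_ne_zero)
      (eventually_of_mem hxU hu),
    divVec_comp_affine hB a _ (fun i => hdiff (htausmooth i)) (eventually_of_mem hxU htau),
    DivMat_comp_affine hB a _ (fun i j => hdiff (hXismooth i j)) (eventually_of_mem hxU hXi),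
    hessian_comp_affine hB a (huhatsmooth.contDiffAt hxU) (eventually_of_mem hxU hu)]
  exact abs_det_mul_transformed_integrand hB ..

/-- Invariance of the trace duality `⟨tr u, (Ξ,τ)⟩_{∂T}`, i.e. of the
integral `∫_T u (div τ) + ∇u · (τ − Div Ξ) − ∇∇u : Ξ dx`, under the combined
Piola–Kirchhoff / Piola transformation (trace-duality identity of Lemma 9, smooth case).
Here `Xihat` plays the role of `Ξ̂`, `tauhat` of `τ̂`, `uhat` of `û`, `Uhat` of `Û`,
`That` of `T̂`, `xhat` of `x̂`. -/
theorem stmt11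
    (B : Matrix (Fin 2) (Fin 2) ℝ) (hB : IsUnit B.det) (a : Fin 2 → ℝ)
    (F : (Fin 2 → ℝ) → (Fin 2 → ℝ)) (hF : ∀ xhat, F xhat = B.mulVec xhat + a)
    (Uhat : Set (Fin 2 → ℝ)) (hUhat : IsOpen Uhat)
    (Xihat Ξ : (Fin 2 → ℝ) → Matrix (Fin 2) (Fin 2) ℝ)
    (hXismooth : ∀ i j : Fin 2, ContDiffOn ℝ 1 (fun x => Xihat x i j) Uhat)
    (hXi : ∀ xhat ∈ Uhat, Ξ (F xhat) = |B.det|⁻¹ • (B * Xihat xhat * B.transpose))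
    (tauhat τ : (Fin 2 → ℝ) → (Fin 2 → ℝ))
    (htausmooth : ∀ i : Fin 2, ContDiffOn ℝ 1 (fun x => tauhat x i) Uhat)
    (htau : ∀ xhat ∈ Uhat, τ (F xhat) = |B.det|⁻¹ • B.mulVec (tauhat xhat))
    (uhat u : (Fin 2 → ℝ) → ℝ)
    (huhatsmooth : ContDiffOn ℝ 2 uhat Uhat)
    (hu : ∀ xhat ∈ Uhat, u (F xhat) = uhat xhat)
    (That : Set (Fin 2 → ℝ)) (hThatcpt : IsCompact That)
    (hThatmeas : MeasurableSet That) (hThatsub : That ⊆ Uhat)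
    (T : Set (Fin 2 → ℝ)) (hT : T = F '' That) :
    ∫ x in T, (u x * divVec τ x + gradF u x ⬝ᵥ (τ x - DivMat Ξ x)
        - frob (hessian u x) (Ξ x))
      = ∫ xhat in That, (uhat xhat * divVec tauhat xhat
          + gradF uhat xhat ⬝ᵥ (tauhat xhat - DivMat Xihat xhat)
          - frob (hessian uhat xhat) (Xihat xhat)) :=
  stmt11_general B hB a F hF Uhat hUhat Xihat Ξ hXismooth hXi tauhat τ htausmooth htau uhat u
    huhatsmooth hu That hThatmeas hThatsub T hT
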